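/- arXiv:1610.07921 — 2 statements merged into one kernel-verified Lean document; each statement's English description precedes it below -/
import Mathlib

section
/- Let G be the complete graph on p ≥ 4 vertices with two edges removed, where the two removed edges do not share a vertex, or share a vertex (both cases, provided the resulting graph is chordal). For the chordal cases, the number of moral acyclic orientations of G equals (p² − p − 4)·(p−3)!. -/
/-- A chord of a closed walk: an edge of `G` between two vertices of the walk
that is not an edge of the walk. -/
def SimpleGraph.Walk.HasChord {V : Type*} {G : SimpleGraph V} {v : V}
    (c : G.Walk v v) : Prop :=
  ∃ a b, a ∈ c.support ∧ b ∈ c.support ∧ G.Adj a b ∧ s(a, b) ∉ c.edges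

/-- A graph is chordal if every cycle with four or more vertices has a chord. -/
def SimpleGraph.IsChordalGraph {V : Type*} (G : SimpleGraph V) : Prop :=
  ∀ (v : V) (c : G.Walk v v), c.IsCycle → 4 ≤ c.length → c.HasChord

/-- A vertex is dominating if it is adjacent to every other vertex. -/
def SimpleGraph.IsDominatingVertex {V : Type*} (G : SimpleGraph V) (v : V) : Prop :=
  ∀ w, w ≠ v → G.Adj v w

/-- `D` is an orientation of `G`: each edge gets exactly one direction. -/
def SimpleGraph.IsOrientation {V : Type*} (G : SimpleGraph V) (D : V → V → Prop) : Prop :=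
  (∀ a b, G.Adj a b ↔ (D a b ∨ D b a)) ∧ ∀ a b, ¬(D a b ∧ D b a)

/-- An orientation (directed relation) is acyclic if it has no directed cycle. -/
def IsAcyclicRel {V : Type*} (D : V → V → Prop) : Prop :=
  ∀ a, ¬ Relation.TransGen D a a

/-- An orientation is moral (w.r.t. `G`) if it contains no v-structure. -/
def SimpleGraph.IsMoralOrient {V : Type*} (G : SimpleGraph V) (D : V → V → Prop) : Prop :=
  ∀ a b c, D a c → D b c → a ≠ b → G.Adj a b

/-- The number of moral acyclic orientations of `G`. -/
noncomputable def moralAcyclicCount {V : Type*} (G : SimpleGraph V) : ℕ :=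
  Set.ncard {D : V → V → Prop |
    G.IsOrientation D ∧ IsAcyclicRel D ∧ G.IsMoralOrient D}

/-- Join of two graphs: all edges of each plus all edges across. -/
def joinGraph {V1 V2 : Type*} (G1 : SimpleGraph V1) (G2 : SimpleGraph V2) :
    SimpleGraph (V1 ⊕ V2) where
  Adj x y := match x, y with
    | .inl a, .inl b => G1.Adj a b
    | .inr a, .inr b => G2.Adj a b
    | .inl _, .inr _ => True
    | .inr _, .inl _ => True
  symm := ⟨by rintro (a | a) (b | b) h <;> simp_all [SimpleGraph.adj_comm]⟩
  loopless := ⟨by rintro (a | a) h <;> simp_all⟩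

/-- Disjoint union of two graphs. -/
def sumGraph {V1 V2 : Type*} (G1 : SimpleGraph V1) (G2 : SimpleGraph V2) :
    SimpleGraph (V1 ⊕ V2) where
  Adj x y := match x, y with
    | .inl a, .inl b => G1.Adj a b
    | .inr a, .inr b => G2.Adj a b
    | _, _ => False
  symm := ⟨by rintro (a | a) (b | b) h <;> simp_all [SimpleGraph.adj_comm]⟩
  loopless := ⟨by rintro (a | a) h <;> simp_all⟩

/-!
A moral acyclic orientation `D` of `K_V` minus the edges `xy`, `xz` restricts to a linear order
of the clique `V \ {x}`. If `x` is a sink, this order is arbitrary and determines `D`: `(p-1)!`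
orientations. Otherwise some `x → n₀` with `n₀` a common neighbour, and morality forces
`n → y` and `n → z` for every common neighbour `n` (directly if `x → n`, and via the directed path
`n → x → n₀ → y` otherwise). So the common neighbours come first in the order, followed by `y`, `z`
in one of two orders, and the in-neighbours of `x` form a proper initial segment of the common
neighbours: `2 (p-3) (p-3)!` orientations. In total `(p-1)! + 2(p-3)(p-3)! = (p²-p-4)(p-3)!`.
Disjoint missing edges `ab`, `cd` leave the chordless 4-cycle `a c b d`.
-/

open scoped Nat

theorem isAcyclicRel_of_forall_lt {V α : Type*} [Preorder α] {D : V → V → Prop} (ρ : V → α)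
    (h : ∀ a b, D a b → ρ a < ρ b) : IsAcyclicRel D := fun a ha => by
  have := Relation.TransGen.lift (p := (· < ·)) ρ h a a ha
  rw [Relation.transGen_eq_self] at this
  exact lt_irrefl _ this

theorem Equiv.eq_of_lt_iff {α : Type*} {n : ℕ} {e₁ e₂ : α ≃ Fin n}
    (h : ∀ u v, e₁ u < e₁ v ↔ e₂ u < e₂ v) : e₁ = e₂ := by
  have hmono : StrictMono (e₁.symm.trans e₂) := fun i j hij => by
    simpa using (h (e₁.symm i) (e₁.symm j)).mp (by simpa using hij)
  have hid : ⇑(e₁.symm.trans e₂) = id := (hmono.range_inj strictMono_id).mp <| by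
    rw [(e₁.symm.trans e₂).surjective.range_eq, Set.range_id]
  exact Equiv.ext fun u => by simpa using (congrFun hid (e₁ u)).symm

theorem exists_equiv_fin_lt_iff {α : Type*} [Fintype α] {n : ℕ} (hcard : Fintype.card α = n)
    (r : α → α → Prop) [IsStrictTotalOrder α r] : ∃ e : α ≃ Fin n, ∀ u v, r u v ↔ e u < e v := by
  classical
  let := linearOrderOfSTO r
  exact ⟨(Fintype.orderIsoFinOfCardEq α hcard).symm.toEquiv, fun u v =>
    ((Fintype.orderIsoFinOfCardEq α hcard).symm.lt_iff_lt).symm⟩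

theorem Equiv.exists_iff_lt_of_le_imp {α : Type*} {n : ℕ} (f : α ≃ Fin n) {P : α → Prop}
    (hP : ∀ a b, f a ≤ f b → P b → P a) (hne : ∃ a, ¬ P a) :
    ∃ k : Fin n, ∀ a, P a ↔ f a < k := by
  classical
  obtain ⟨a₀, ha₀⟩ := hne
  let s := Finset.univ.filter fun i => ¬ P (f.symm i)
  have hs : s.Nonempty := ⟨f a₀, by simpa [s] using ha₀⟩
  refine ⟨s.min' hs, fun a => ⟨fun ha => ?_, fun ha => ?_⟩⟩
  · by_contra hle
    have hmem := s.min'_mem hs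
    simp only [s, Finset.mem_filter, Finset.mem_univ, true_and] at hmem
    exact hmem (hP _ a (by simpa using not_lt.mp hle) ha)
  · by_contra hPa
    exact (s.min'_le (f a) (by simpa [s] using hPa)).not_gt ha

theorem eq_or_eq_or_eq_or_ne {V : Type*} (v x y z : V) :
    v = x ∨ v = y ∨ v = z ∨ (v ≠ x ∧ v ≠ y ∧ v ≠ z) := by
  tauto

theorem Fintype.card_subtype_ne {V : Type*} [Fintype V] [DecidableEq V] (x : V) :
    Fintype.card {v // v ≠ x} = Fintype.card V - 1 := by
  simp [Fintype.card_subtype, Finset.filter_ne']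

theorem Fintype.card_subtype_ne_ne_ne {V : Type*} [Fintype V] [DecidableEq V] {x y z : V}
    (hxy : x ≠ y) (hxz : x ≠ z) (hyz : y ≠ z) :
    Fintype.card {v // v ≠ x ∧ v ≠ y ∧ v ≠ z} = Fintype.card V - 3 := by
  have : (Finset.univ.filter fun v => v ≠ x ∧ v ≠ y ∧ v ≠ z) = ({x, y, z} : Finset V)ᶜ := by
    ext; simp
  rw [Fintype.card_subtype, this, Finset.card_compl,
    Finset.card_eq_three.mpr ⟨x, y, z, hxy, hxz, hyz, rfl⟩]

theorem Nat.factorial_sub_one_add_two_mul_eq {n : ℕ} (hn : 3 ≤ n) :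
    (n - 1)! + 2 * (n - 3) * (n - 3)! = (n ^ 2 - n - 4) * (n - 3)! := by
  obtain ⟨m, rfl⟩ := Nat.exists_eq_add_of_le hn
  have h : (3 + m) ^ 2 - (3 + m) - 4 = (m + 1) * (m + 2) + 2 * m := by
    rw [show (3 + m) ^ 2 = m ^ 2 + 6 * m + 9 by ring]
    ring_nf
    omega
  simp only [show 3 + m - 1 = m + 2 by omega, show 3 + m - 3 = m by omega, h,
    Nat.factorial_succ]
  ring

namespace SimpleGraph

section Orientation

variable {V α : Type*} {G : SimpleGraph V} {D : V → V → Prop}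

variable (G) in
def orientBy [LinearOrder α] (ρ : V → α) (u v : V) : Prop := G.Adj u v ∧ ρ u < ρ v

section orientBy

variable [LinearOrder α] {ρ : V → α}

theorem isOrientation_orientBy (hρ : Function.Injective ρ) : G.IsOrientation (G.orientBy ρ) := by
  refine ⟨fun u v => ⟨fun h => ?_, ?_⟩, fun u v ⟨h₁, h₂⟩ => h₁.2.not_gt h₂.2⟩
  · rcases lt_trichotomy (ρ u) (ρ v) with hlt | heq | hgt
    · exact .inl ⟨h, hlt⟩
    · exact absurd (hρ heq) h.ne
    · exact .inr ⟨h.symm, hgt⟩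
  · rintro (⟨h, -⟩ | ⟨h, -⟩)
    exacts [h, h.symm]

theorem isAcyclicRel_orientBy (ρ : V → α) : IsAcyclicRel (G.orientBy ρ) :=
  isAcyclicRel_of_forall_lt ρ fun _ _ h => h.2

theorem orientBy_eq (hD : G.IsOrientation D) (hρ : ∀ u v, D u v → ρ u < ρ v) :
    G.orientBy ρ = D := by
  ext u v
  exact ⟨fun ⟨hadj, hlt⟩ => ((hD.1 u v).mp hadj).resolve_right fun h => (hρ v u h).not_gt hlt,
    fun h => ⟨(hD.1 u v).mpr (.inl h), hρ u v h⟩⟩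

end orientBy

theorem IsOrientation.adj (hD : G.IsOrientation D) {u v : V} (h : D u v) : G.Adj u v :=
  (hD.1 u v).mpr (.inl h)

theorem IsOrientation.asymm (hD : G.IsOrientation D) {u v : V} (h : D u v) : ¬ D v u :=
  fun h' => hD.2 u v ⟨h, h'⟩

theorem IsOrientation.rel_of_transGen (hD : G.IsOrientation D) (hac : IsAcyclicRel D) {u v : V}
    (hadj : G.Adj u v) (h : Relation.TransGen D u v) : D u v :=
  ((hD.1 u v).mp hadj).resolve_right fun h' => hac u (h.tail h')

theorem IsMoralOrient.rel_of_not_adj (hmo : G.IsMoralOrient D) (hD : G.IsOrientation D)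
    {a b c : V} (hac : D a c) (hab : a ≠ b) (hnadj : ¬ G.Adj a b) (hcb : G.Adj c b) : D c b :=
  ((hD.1 c b).mp hcb).resolve_right fun h => hnadj (hmo a b c hac h hab)

theorem IsOrientation.exists_equiv_fin_of_isClique (hD : G.IsOrientation D)
    (hac : IsAcyclicRel D) {P : V → Prop} [Fintype {v // P v}] {n : ℕ}
    (hcard : Fintype.card {v // P v} = n) (hP : G.IsClique {v | P v}) :
    ∃ e : {v // P v} ≃ Fin n, ∀ u v : {v // P v}, D u v ↔ e u < e v := by
  have hadj : ∀ u v : {v // P v}, u ≠ v → G.Adj u v := fun u v h =>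
    hP u.2 v.2 (Subtype.coe_injective.ne h)
  have : IsStrictTotalOrder {v // P v} (fun u v => D u v) :=
    { trichotomous := fun u v h₁ h₂ => by
        by_contra h
        exact ((hD.1 u v).mp (hadj u v h)).elim h₁ h₂
      irrefl := fun u h => hD.asymm h h
      trans := fun u v w h₁ h₂ => by
        rcases eq_or_ne u w with rfl | h
        · exact absurd h₁ (hD.asymm h₂)
        · exact hD.rel_of_transGen hac (hadj u w h) (.head h₁ (.single h₂)) }
  exact exists_equiv_fin_lt_iff hcard _

end Orientation

theorem not_isChordalGraph_of_square {V : Type*} {G : SimpleGraph V} {a b c d : V} (hab : a ≠ b)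
    (hcd : c ≠ d) (hac : G.Adj a c) (hcb : G.Adj c b) (hbd : G.Adj b d) (hda : G.Adj d a)
    (hnab : ¬ G.Adj a b) (hncd : ¬ G.Adj c d) : ¬ G.IsChordalGraph := by
  intro hG
  let w : G.Walk a a := .cons hac (.cons hcb (.cons hbd (.cons hda .nil)))
  have hw : w.IsCycle := by
    simp [w, Walk.cons_isCycle_iff, hac.ne, hcb.ne, hbd.ne, hda.ne, hab, hcd, hab.symm,
      hac.ne.symm, hda.ne.symm]
  obtain ⟨u, v, hu, hv, huv, hnot⟩ := hG a w hw (by simp [w])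
  simp only [w, Walk.support_cons, Walk.support_nil, List.mem_cons, List.not_mem_nil, or_false,
    Walk.edges_cons, Walk.edges_nil, Sym2.eq_iff, not_or] at hu hv hnot
  rcases hu with rfl | rfl | rfl | rfl | rfl <;> rcases hv with rfl | rfl | rfl | rfl | rfl <;>
    simp_all [adj_comm]

section Wedge

variable {V : Type*} {x y z : V}

def completeMinusWedge (x y z : V) : SimpleGraph V := ⊤ \ fromEdgeSet {s(x, y), s(x, z)}

theorem completeMinusWedge_adj {u v : V} :
    (completeMinusWedge x y z).Adj u v ↔ u ≠ v ∧ s(u, v) ≠ s(x, y) ∧ s(u, v) ≠ s(x, z) := by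
  simp only [completeMinusWedge, sdiff_adj, top_adj, fromEdgeSet_adj, Set.mem_insert_iff,
    Set.mem_singleton_iff]
  tauto

theorem completeMinusWedge_comm : completeMinusWedge x y z = completeMinusWedge x z y := by
  rw [completeMinusWedge, completeMinusWedge, Set.pair_comm]

theorem completeMinusWedge_adj_of_ne {u v : V} (huv : u ≠ v) (hu : u ≠ x) (hv : v ≠ x) :
    (completeMinusWedge x y z).Adj u v := by
  simp [completeMinusWedge_adj, huv, hu, hv]

theorem completeMinusWedge_center_adj_iff {v : V} :
    (completeMinusWedge x y z).Adj x v ↔ v ≠ x ∧ v ≠ y ∧ v ≠ z := by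
  simp only [completeMinusWedge_adj, ne_eq, Sym2.eq_iff]
  tauto

theorem completeMinusWedge_eq_or_eq_of_not_adj {a b : V} (hab : a ≠ b)
    (h : ¬ (completeMinusWedge x y z).Adj a b) :
    (a = x ∧ (b = y ∨ b = z)) ∨ (b = x ∧ (a = y ∨ a = z)) := by
  simp only [completeMinusWedge_adj, ne_eq, Sym2.eq_iff] at h
  tauto

theorem exists_eq_completeMinusWedge_of_isChordalGraph {a b c d : V} (hab : a ≠ b) (hcd : c ≠ d)
    (hne : s(a, b) ≠ s(c, d))
    (hG : ((⊤ : SimpleGraph V) \ fromEdgeSet {s(a, b), s(c, d)}).IsChordalGraph) :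
    ∃ x y z, x ≠ y ∧ x ≠ z ∧ y ≠ z ∧
      (⊤ : SimpleGraph V) \ fromEdgeSet {s(a, b), s(c, d)} = completeMinusWedge x y z := by
  by_cases hac : a = c
  · subst hac
    exact ⟨a, b, d, hab, hcd, fun h => hne (by rw [h]), rfl⟩
  by_cases had : a = d
  · subst had
    exact ⟨a, b, c, hab, hcd.symm, fun h => hne (by rw [h, Sym2.eq_swap]),
      by rw [completeMinusWedge, Sym2.eq_swap (a := c)]⟩
  by_cases hbc : b = c
  · subst hbc
    exact ⟨b, a, d, hab.symm, hcd, fun h => hne (by rw [h, Sym2.eq_swap]),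
      by rw [completeMinusWedge, Sym2.eq_swap (a := a)]⟩
  by_cases hbd : b = d
  · subst hbd
    exact ⟨b, a, c, hab.symm, hcd.symm, fun h => hne (by rw [h]),
      by rw [completeMinusWedge, Sym2.eq_swap (a := a), Sym2.eq_swap (a := c)]⟩
  refine absurd hG (not_isChordalGraph_of_square hab hcd ?_ ?_ ?_ ?_ ?_ ?_) <;>
    simp [hab, hcd, hac, had, hbc, hbd, Ne.symm hab, Ne.symm hcd, Ne.symm hac,
      Ne.symm had, Ne.symm hbc, Ne.symm hbd]

theorem IsOrientation.completeMinusWedge_rel_of_source {D : V → V → Prop}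
    (hD : (completeMinusWedge x y z).IsOrientation D) (hac : IsAcyclicRel D)
    (hmo : (completeMinusWedge x y z).IsMoralOrient D) (hxy : x ≠ y) {n₀ n : V} (hx : D x n₀)
    (hn : n ≠ x ∧ n ≠ y ∧ n ≠ z) : D n y := by
  have hnadj : ¬ (completeMinusWedge x y z).Adj x y := fun h =>
    (completeMinusWedge_center_adj_iff.mp h).2.1 rfl
  have hout : ∀ m, D x m → D m y := fun m hm =>
    have hm' := completeMinusWedge_center_adj_iff.mp (hD.adj hm)
    hmo.rel_of_not_adj hD hm hxy hnadj (completeMinusWedge_adj_of_ne hm'.2.1 hm'.1 hxy.symm)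
  rcases (hD.1 x n).mp (completeMinusWedge_center_adj_iff.mpr hn) with h | h
  · exact hout n h
  · exact hD.rel_of_transGen hac (completeMinusWedge_adj_of_ne hn.2.1 hn.1 hxy.symm)
      (.head h (.head hx (.single (hout n₀ hx))))

theorem IsOrientation.exists_completeMinusWedge_rel_center_iff {D : V → V → Prop}
    (hD : (completeMinusWedge x y z).IsOrientation D) (hac : IsAcyclicRel D) {n : ℕ}
    (f : {v // v ≠ x ∧ v ≠ y ∧ v ≠ z} ≃ Fin n)
    (hf : ∀ u v : {v // v ≠ x ∧ v ≠ y ∧ v ≠ z}, D u v ↔ f u < f v) {n₀ : V}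
    (hx : D x n₀) : ∃ k : Fin n, ∀ u : {v // v ≠ x ∧ v ≠ y ∧ v ≠ z}, D u x ↔ f u < k := by
  have hadj : ∀ {v}, (completeMinusWedge x y z).Adj v x ↔ v ≠ x ∧ v ≠ y ∧ v ≠ z := by
    intro v
    rw [adj_comm]
    exact completeMinusWedge_center_adj_iff
  refine f.exists_iff_lt_of_le_imp (P := fun u => D u x) (fun a b hab hb => ?_)
    ⟨⟨n₀, hadj.mp (hD.adj hx).symm⟩, hD.asymm hx⟩
  rcases hab.eq_or_lt with h | h
  · rwa [f.injective h]
  · exact hD.rel_of_transGen hac (hadj.mpr a.2) (.head ((hf a b).mpr h) (.single hb))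

variable [Fintype V] [DecidableEq V]

/-- A point of the left summand is a linear order of `V \ {x}`, with `x` placed last. A point
`(s, f, k)` of the right summand orders the neighbours `V \ {x, y, z}` of `x` by `f`, inserts `x`
just before the `k`-th of them, and puts `y, z` on top, in the order given by `s`. -/
abbrev WedgeOrientationData (x y z : V) : Type _ :=
  ({v // v ≠ x} ≃ Fin (Fintype.card V - 1)) ⊕
    (Bool × ({v // v ≠ x ∧ v ≠ y ∧ v ≠ z} ≃ Fin (Fintype.card V - 3)) × Fin (Fintype.card V - 3))

def wedgeRank : WedgeOrientationData x y z → V → ℕ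
  | .inl e, v => if h : v = x then Fintype.card V else e ⟨v, h⟩
  | .inr (s, f, k), v =>
    if hx : v = x then 2 * k + 1
    else if hy : v = y then 2 * Fintype.card V + if s then 0 else 1
    else if hz : v = z then 2 * Fintype.card V + if s then 1 else 0
    else 2 * f ⟨v, hx, hy, hz⟩ + 2

def wedgeOrient (t : WedgeOrientationData x y z) : V → V → Prop :=
  (completeMinusWedge x y z).orientBy (wedgeRank t)

theorem wedgeRank_injective (hxy : x ≠ y) (hxz : x ≠ z) (hyz : y ≠ z)
    (t : WedgeOrientationData x y z) : Function.Injective (wedgeRank t) := by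
  intro u v h
  rcases t with e | ⟨s, f, k⟩
  · by_cases hu : u = x <;> by_cases hv : v = x <;>
      simp only [wedgeRank, hu, hv, dite_true, dite_false] at h
    · exact hu.trans hv.symm
    · have := (e ⟨v, hv⟩).isLt; omega
    · have := (e ⟨u, hu⟩).isLt; omega
    · simpa using e.injective (Fin.ext h)
  · rcases eq_or_eq_or_eq_or_ne u x y z with hu | hu | hu | hu <;>
      rcases eq_or_eq_or_eq_or_ne v x y z with hv | hv | hv | hv <;>
      simp [wedgeRank, hu, hv, hxy, hxz, hyz, hxy.symm, hxz.symm, hyz.symm] at h ⊢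
    all_goals first
      | exact congrArg Subtype.val (f.injective (Fin.ext h))
      | (exfalso; (try split_ifs at h) <;> omega)

theorem isMoralOrient_wedgeOrient (hxy : x ≠ y) (hxz : x ≠ z) (hyz : y ≠ z)
    (t : WedgeOrientationData x y z) :
    (completeMinusWedge x y z).IsMoralOrient (wedgeOrient t) := by
  rintro a b c ⟨hac, hrac⟩ ⟨hbc, hrbc⟩ hab
  by_contra hnadj
  suffices ∀ w, (w = y ∨ w = z) → (completeMinusWedge x y z).Adj x c →
      wedgeRank t x < wedgeRank t c → wedgeRank t w < wedgeRank t c → False by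
    rcases completeMinusWedge_eq_or_eq_of_not_adj hab hnadj with ⟨rfl, hb⟩ | ⟨rfl, ha⟩
    · exact this b hb hac hrac hrbc
    · exact this a ha hbc hrbc hrac
  intro w hw hxc hx hwc
  obtain ⟨hcx, hcy, hcz⟩ := completeMinusWedge_center_adj_iff.mp hxc
  rcases t with e | ⟨s, f, k⟩
  · simp only [wedgeRank, hcx, ↓reduceDIte] at hx
    omega
  · rcases hw with rfl | rfl <;>
      simp only [wedgeRank, hcx, hcy, hcz, hxy.symm, hxz.symm, hyz.symm, ↓reduceDIte] at hwc <;>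
      split_ifs at hwc <;> omega

section Surjective

variable {D : V → V → Prop}

theorem exists_wedgeOrient_inl_eq (hD : (completeMinusWedge x y z).IsOrientation D)
    (hac : IsAcyclicRel D) (hsink : ∀ v, ¬ D x v) :
    ∃ e, wedgeOrient (.inl e : WedgeOrientationData x y z) = D := by
  obtain ⟨e, he⟩ := hD.exists_equiv_fin_of_isClique hac (Fintype.card_subtype_ne x)
    fun u hu v hv huv => completeMinusWedge_adj_of_ne huv hu hv
  refine ⟨e, orientBy_eq hD fun u v huv => ?_⟩
  have hu : u ≠ x := by rintro rfl; exact hsink v huv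
  by_cases hv : v = x
  · simp only [wedgeRank, hu, hv, ↓reduceDIte]
    omega
  · simpa [wedgeRank, hu, hv] using (he ⟨u, hu⟩ ⟨v, hv⟩).mp huv

theorem exists_wedgeOrient_inr_eq (hxy : x ≠ y) (hxz : x ≠ z) (hyz : y ≠ z)
    (hD : (completeMinusWedge x y z).IsOrientation D) (hac : IsAcyclicRel D)
    (hmo : (completeMinusWedge x y z).IsMoralOrient D) {n₀ : V} (hx : D x n₀) :
    ∃ t : WedgeOrientationData x y z, wedgeOrient t = D := by
  classical
  have hny := fun n (hn : n ≠ x ∧ n ≠ y ∧ n ≠ z) =>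
    hD.completeMinusWedge_rel_of_source hac hmo hxy hx hn
  rw [completeMinusWedge_comm] at hD hmo
  have hnz := fun n (hn : n ≠ x ∧ n ≠ y ∧ n ≠ z) =>
    hD.completeMinusWedge_rel_of_source hac hmo hxz hx ⟨hn.1, hn.2.2, hn.2.1⟩
  rw [← completeMinusWedge_comm] at hD hmo
  obtain ⟨f, hf⟩ := hD.exists_equiv_fin_of_isClique hac (Fintype.card_subtype_ne_ne_ne hxy hxz hyz)
    fun u hu v hv huv => completeMinusWedge_adj_of_ne huv hu.1 hv.1
  obtain ⟨k, hk⟩ := hD.exists_completeMinusWedge_rel_center_iff hac f hf hx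
  refine ⟨.inr (decide (D y z), f, k), orientBy_eq hD fun u v huv => ?_⟩
  have hadj := hD.adj huv
  rcases eq_or_eq_or_eq_or_ne u x y z with hu | hu | hu | hu <;>
    rcases eq_or_eq_or_eq_or_ne v x y z with hv | hv | hv | hv <;>
    simp [wedgeRank, completeMinusWedge_adj, hu, hv, hxy.symm, hxz.symm, hyz.symm] at hadj huv ⊢
  · exact not_lt.mp fun h => hD.asymm huv ((hk ⟨v, hv⟩).mpr h)
  · simp [huv]
  · exact absurd (hny v hv) (hD.asymm huv)
  · simp [hD.asymm huv]
  · exact absurd (hnz v hv) (hD.asymm huv)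
  · have := (hk ⟨u, hu⟩).mp huv
    omega
  · split_ifs <;> omega
  · split_ifs <;> omega
  · exact (hf ⟨u, hu⟩ ⟨v, hv⟩).mp huv

end Surjective

section Injective

theorem wedgeOrient_inl_iff (e : {v // v ≠ x} ≃ Fin (Fintype.card V - 1)) (u v : {v // v ≠ x}) :
    wedgeOrient (.inl e : WedgeOrientationData x y z) u v ↔ e u < e v := by
  rcases eq_or_ne u v with rfl | h
  · simp [wedgeOrient, orientBy]
  · simp [wedgeOrient, orientBy, wedgeRank, u.2, v.2,
      completeMinusWedge_adj_of_ne (Subtype.coe_injective.ne h) u.2 v.2]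

theorem not_wedgeOrient_inl_center (e : {v // v ≠ x} ≃ Fin (Fintype.card V - 1)) (v : V) :
    ¬ wedgeOrient (.inl e : WedgeOrientationData x y z) x v := by
  rintro ⟨hadj, hlt⟩
  have hv := (completeMinusWedge_center_adj_iff.mp hadj).1
  simp only [wedgeRank, hv, ↓reduceDIte] at hlt
  omega

variable {s : Bool} {f : {v // v ≠ x ∧ v ≠ y ∧ v ≠ z} ≃ Fin (Fintype.card V - 3)}
  {k : Fin (Fintype.card V - 3)}

theorem wedgeOrient_inr_iff (u v : {v // v ≠ x ∧ v ≠ y ∧ v ≠ z}) :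
    wedgeOrient (.inr (s, f, k) : WedgeOrientationData x y z) u v ↔ f u < f v := by
  rcases eq_or_ne u v with rfl | h
  · simp [wedgeOrient, orientBy]
  · simp [wedgeOrient, orientBy, wedgeRank, u.2, v.2,
      completeMinusWedge_adj_of_ne (Subtype.coe_injective.ne h) u.2.1 v.2.1]

theorem wedgeOrient_inr_leaves_iff (hxy : x ≠ y) (hxz : x ≠ z) (hyz : y ≠ z) :
    wedgeOrient (.inr (s, f, k) : WedgeOrientationData x y z) y z ↔ s = true := by
  cases s <;> simp [wedgeOrient, orientBy, wedgeRank, hxy.symm, hxz.symm, hyz.symm,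
    completeMinusWedge_adj_of_ne hyz hxy.symm hxz.symm]

theorem wedgeOrient_inr_center_iff (n : {v // v ≠ x ∧ v ≠ y ∧ v ≠ z}) :
    wedgeOrient (.inr (s, f, k) : WedgeOrientationData x y z) x n ↔ k ≤ f n := by
  simp [wedgeOrient, orientBy, wedgeRank, n.2, completeMinusWedge_center_adj_iff.mpr n.2]

theorem wedgeOrient_injective (hxy : x ≠ y) (hxz : x ≠ z) (hyz : y ≠ z) :
    Function.Injective (wedgeOrient : WedgeOrientationData x y z → V → V → Prop) := by
  intro t₁ t₂ h
  rcases t₁ with e₁ | ⟨s₁, f₁, k₁⟩ <;> rcases t₂ with e₂ | ⟨s₂, f₂, k₂⟩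
  · exact congrArg Sum.inl <| Equiv.eq_of_lt_iff fun u v => by
      rw [← wedgeOrient_inl_iff, h, wedgeOrient_inl_iff]
  · refine absurd ?_ (not_wedgeOrient_inl_center (y := y) (z := z) e₁ (f₂.symm k₂))
    rw [h, wedgeOrient_inr_center_iff, Equiv.apply_symm_apply]
  · refine absurd ?_ (not_wedgeOrient_inl_center (y := y) (z := z) e₂ (f₁.symm k₁))
    rw [← h, wedgeOrient_inr_center_iff, Equiv.apply_symm_apply]
  · obtain rfl : s₁ = s₂ := Bool.eq_iff_iff.mpr <| by
      rw [← wedgeOrient_inr_leaves_iff hxy hxz hyz, h,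
        wedgeOrient_inr_leaves_iff hxy hxz hyz]
    obtain rfl : f₁ = f₂ := Equiv.eq_of_lt_iff fun u v => by
      rw [← wedgeOrient_inr_iff, h, wedgeOrient_inr_iff]
    obtain rfl : k₁ = k₂ := eq_of_forall_ge_iff fun i => by
      have := wedgeOrient_inr_center_iff (s := s₁) (f := f₁) (k := k₁) (f₁.symm i)
      rwa [h, wedgeOrient_inr_center_iff, Equiv.apply_symm_apply, Iff.comm] at this
    rfl

end Injective

theorem setOf_moralAcyclic_completeMinusWedge (hxy : x ≠ y) (hxz : x ≠ z) (hyz : y ≠ z) :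
    {D | (completeMinusWedge x y z).IsOrientation D ∧ IsAcyclicRel D ∧
      (completeMinusWedge x y z).IsMoralOrient D} =
      Set.range (wedgeOrient : WedgeOrientationData x y z → V → V → Prop) := by
  ext D
  constructor
  · rintro ⟨hD, hac, hmo⟩
    by_cases hsource : ∃ v, D x v
    · obtain ⟨n₀, hx⟩ := hsource
      exact exists_wedgeOrient_inr_eq hxy hxz hyz hD hac hmo hx
    · obtain ⟨e, he⟩ := exists_wedgeOrient_inl_eq hD hac (not_exists.mp hsource)
      exact ⟨_, he⟩
  · rintro ⟨t, rfl⟩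
    exact ⟨isOrientation_orientBy (wedgeRank_injective hxy hxz hyz t), isAcyclicRel_orientBy _,
      isMoralOrient_wedgeOrient hxy hxz hyz t⟩

theorem card_wedgeOrientationData (hxy : x ≠ y) (hxz : x ≠ z) (hyz : y ≠ z) :
    Fintype.card (WedgeOrientationData x y z) =
      (Fintype.card V - 1)! + 2 * (Fintype.card V - 3) * (Fintype.card V - 3)! := by
  simp only [Fintype.card_sum, Fintype.card_prod, Fintype.card_bool, Fintype.card_fin]
  rw [Fintype.card_equiv (Fintype.equivFinOfCardEq (Fintype.card_subtype_ne x)),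
    Fintype.card_equiv (Fintype.equivFinOfCardEq (Fintype.card_subtype_ne_ne_ne hxy hxz hyz)),
    Fintype.card_subtype_ne, Fintype.card_subtype_ne_ne_ne hxy hxz hyz]
  ring

theorem moralAcyclicCount_completeMinusWedge (hxy : x ≠ y) (hxz : x ≠ z) (hyz : y ≠ z) :
    moralAcyclicCount (completeMinusWedge x y z) =
      (Fintype.card V - 1)! + 2 * (Fintype.card V - 3) * (Fintype.card V - 3)! := by
  rw [moralAcyclicCount, setOf_moralAcyclic_completeMinusWedge hxy hxz hyz, ← Set.image_univ,
    Set.ncard_image_of_injective _ (wedgeOrient_injective hxy hxz hyz), Set.ncard_univ,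
    Nat.card_eq_fintype_card, card_wedgeOrientationData hxy hxz hyz]

end Wedge

end SimpleGraph

theorem count_complete_minus_two_edges_general (p : ℕ) (a b c d : Fin p)
    (hab : a ≠ b) (hcd : c ≠ d) (hne : s(a, b) ≠ s(c, d))
    (hchord : ((⊤ : SimpleGraph (Fin p)) \
        SimpleGraph.fromEdgeSet {s(a, b), s(c, d)}).IsChordalGraph) :
    moralAcyclicCount ((⊤ : SimpleGraph (Fin p)) \
        SimpleGraph.fromEdgeSet {s(a, b), s(c, d)})
      = (p ^ 2 - p - 4) * Nat.factorial (p - 3) := by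
  obtain ⟨x, y, z, hxy, hxz, hyz, hG⟩ :=
    SimpleGraph.exists_eq_completeMinusWedge_of_isChordalGraph hab hcd hne hchord
  have hp : 2 < p := by simpa using Fintype.two_lt_card_iff.mpr ⟨x, y, z, hxy, hxz, hyz⟩
  rw [hG, SimpleGraph.moralAcyclicCount_completeMinusWedge hxy hxz hyz, Fintype.card_fin,
    Nat.factorial_sub_one_add_two_mul_eq hp]

theorem count_complete_minus_two_edges (p : ℕ) (hp : 4 ≤ p) (a b c d : Fin p)
    (hab : a ≠ b) (hcd : c ≠ d) (hne : s(a, b) ≠ s(c, d))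
    (hchord : ((⊤ : SimpleGraph (Fin p)) \
        SimpleGraph.fromEdgeSet {s(a, b), s(c, d)}).IsChordalGraph) :
    moralAcyclicCount ((⊤ : SimpleGraph (Fin p)) \
        SimpleGraph.fromEdgeSet {s(a, b), s(c, d)})
      = (p ^ 2 - p - 4) * Nat.factorial (p - 3) :=
  count_complete_minus_two_edges_general p a b c d hab hcd hne hchord
end

section
/- Let T be a tree on p ≥ 2 vertices, and let G be the join of T with a complete graph on m vertices (m universal vertices added to T). Then the number of moral acyclic orientations of G equals ((p−1)·m² + (2p−1)·m + p)·m!. -/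
/-!
A moral acyclic orientation of `T ∨ Kₘ` restricts to a linear order `σ` of the clique and to a
moral acyclic orientation of the tree; in a tree the latter has no vertex with two in-neighbours,
so it is the orientation away from a root `r`. Acyclicity makes the clique vertices pointing to a
tree vertex `v` an initial segment of `σ`, of some length `pos v ≤ m`; it also makes `pos`
monotone away from `r`, while morality makes the tree vertices with `pos v < m` (which all point
to the top clique vertex) pairwise adjacent. In a tree this leaves three shapes: no such vertex
(`p` choices of `r`), only the root (`p * m`), or the root and one child `b` with
`pos r ≤ pos b` (`2 (p - 1) * (m + 1).choose 2`). With the `m!` choices of `σ` this is the formula.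
-/

open Finset

section Order

variable {m : ℕ}

lemma Fin.exists_forall_iff_val_lt {Q : Fin m → Prop} (hQ : ∀ i j, i < j → Q j → Q i) :
    ∃ k ≤ m, ∀ j : Fin m, Q j ↔ (j : ℕ) < k := by
  classical
  have hQ' : ∀ i j, i ≤ j → Q j → Q i := fun i j hij hj =>
    hij.eq_or_lt.elim (fun h => h ▸ hj) (hQ i j · hj)
  refine ⟨#{j | Q j}, (card_filter_le _ _).trans (by simp), fun j => ⟨fun hj => ?_, fun hj => ?_⟩⟩
  · have hsub : Iic j ⊆ ({j | Q j} : Finset (Fin m)) := fun i hi =>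
      mem_filter.2 ⟨mem_univ _, hQ' i j (mem_Iic.1 hi) hj⟩
    simpa using card_le_card hsub
  · by_contra hnj
    have hsub : ({j | Q j} : Finset (Fin m)) ⊆ Iio j := fun i hi =>
      mem_Iio.2 (lt_of_not_ge fun hji => hnj (hQ' j i hji (mem_filter.1 hi).2))
    simpa using (card_le_card hsub).trans_lt' hj

lemma Fin.eq_of_forall_val_lt_iff {k k' : ℕ} (hk : k ≤ m) (hk' : k' ≤ m)
    (h : ∀ j : Fin m, (j : ℕ) < k ↔ (j : ℕ) < k') : k = k' := by
  by_contra hne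
  rcases Nat.lt_or_gt_of_ne hne with hlt | hlt
  · exact lt_irrefl k ((h ⟨k, hlt.trans_le hk'⟩).2 hlt)
  · exact lt_irrefl k' ((h ⟨k', hlt.trans_le hk⟩).1 hlt)

lemma Equiv.Perm.val_eq_card_lt (σ : Equiv.Perm (Fin m)) (a : Fin m) :
    (σ a : ℕ) = #{b | σ b < σ a} := by
  classical
  rw [← Fin.card_Iio (σ a), ← card_map σ.symm.toEmbedding]
  congr 1
  ext b
  simp

lemma Equiv.Perm.eq_of_lt_iff {σ τ : Equiv.Perm (Fin m)} (h : ∀ a b, σ a < σ b ↔ τ a < τ b) :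
    σ = τ := by
  ext a
  simp only [Equiv.Perm.val_eq_card_lt, h]

theorem exists_perm_of_isOrientation_top {R : Fin m → Fin m → Prop}
    (hR : (⊤ : SimpleGraph (Fin m)).IsOrientation R) (hac : IsAcyclicRel R) :
    ∃ σ : Equiv.Perm (Fin m), ∀ a b, R a b ↔ σ a < σ b := by
  classical
  have htotal : ∀ a b, a ≠ b → R a b ∨ R b a := fun a b => (hR.1 a b).1
  have hirrefl : ∀ a, ¬ R a a := fun a h => hac a (.single h)
  have htrans : ∀ a b c, R a b → R b c → R a c := fun a b c hab hbc =>
    (htotal a c (by rintro rfl; exact hac a (.tail (.single hab) hbc))).resolve_right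
      fun hca => hac a (.tail (.tail (.single hab) hbc) hca)
  set rank : Fin m → ℕ := fun a => #{b | R b a}
  have hrank_lt : ∀ a b, R a b → rank a < rank b := fun a b hab =>
    card_lt_card <| (ssubset_iff_of_subset fun c hc =>
      mem_filter.2 ⟨mem_univ _, htrans _ _ _ (mem_filter.1 hc).2 hab⟩).2
      ⟨a, by simp [hab, hirrefl]⟩
  have hrank_lt_m : ∀ a, rank a < m := fun a => by
    simpa using card_lt_card ((ssubset_iff_of_subset (subset_univ {b | R b a})).2
      ⟨a, by simp [hirrefl]⟩)
  have hinj : Function.Injective fun a => (⟨rank a, hrank_lt_m a⟩ : Fin m) := fun a b hab => by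
    by_contra hne
    have : rank a = rank b := congrArg Fin.val hab
    rcases htotal a b hne with h | h <;> have := hrank_lt _ _ h <;> omega
  refine ⟨Equiv.ofBijective _ (Finite.injective_iff_bijective.1 hinj), fun a b =>
    ⟨hrank_lt a b, fun hab => ?_⟩⟩
  have hlt : rank a < rank b := hab
  refine (htotal a b (by rintro rfl; omega)).resolve_right fun hba => ?_
  exact absurd (hrank_lt b a hba) (by omega)

lemma isAcyclicRel_of_map_lt {α β : Type*} [Preorder β] {D : α → α → Prop} (f : α → β)
    (hf : ∀ a b, D a b → f a < f b) : IsAcyclicRel D := fun a ha => by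
  simpa [Relation.transGen_eq_self] using Relation.TransGen.lift f hf a a ha

lemma IsAcyclicRel.comap {α β : Type*} {D : β → β → Prop} (hD : IsAcyclicRel D) (f : α → β) :
    IsAcyclicRel fun a b => D (f a) (f b) := fun a ha =>
  hD (f a) (ha.lift f fun _ _ h => h)

end Order

namespace SimpleGraph

variable {V W : Type*} {G : SimpleGraph V} {G' : SimpleGraph W} {D : V → V → Prop}

lemma IsOrientation.comap (hD : G.IsOrientation D) (f : G' ↪g G) :
    G'.IsOrientation fun a b => D (f a) (f b) :=
  ⟨fun a b => f.map_adj_iff.symm.trans (hD.1 (f a) (f b)), fun a b => hD.2 (f a) (f b)⟩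

lemma IsMoralOrient.comap (hD : G.IsMoralOrient D) (f : G' ↪g G) :
    G'.IsMoralOrient fun a b => D (f a) (f b) := fun _ _ _ hac hbc hab =>
  f.map_adj_iff.1 (hD _ _ _ hac hbc (f.injective.ne hab))

def Embedding.joinInl (G : SimpleGraph V) (G' : SimpleGraph W) : G ↪g joinGraph G G' :=
  ⟨.inl, Iff.rfl⟩

def Embedding.joinInr (G : SimpleGraph V) (G' : SimpleGraph W) : G' ↪g joinGraph G G' :=
  ⟨.inr, Iff.rfl⟩

section Tree

variable {T : SimpleGraph V} {r u v w : V}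

def orientAwayFrom (T : SimpleGraph V) (r v w : V) : Prop :=
  T.Adj v w ∧ T.dist r v < T.dist r w

lemma not_orientAwayFrom_root : ¬ T.orientAwayFrom r v r := fun h => by simpa using h.2

lemma orientAwayFrom_root_of_adj (h : T.Adj r v) : T.orientAwayFrom r r v :=
  ⟨h, by simp [dist_eq_one_iff_adj.2 h]⟩

lemma IsTree.dist_eq_add_one_of_orientAwayFrom (hT : T.IsTree) (h : T.orientAwayFrom r v w) :
    T.dist r w = T.dist r v + 1 := by
  have := hT.dist_eq_dist_add_one_of_adj r h.1
  have := h.2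
  omega

lemma IsTree.isOrientation_orientAwayFrom (hT : T.IsTree) (r : V) :
    T.IsOrientation (T.orientAwayFrom r) := by
  refine ⟨fun v w => ⟨fun h => ?_, ?_⟩, fun v w ⟨hvw, hwv⟩ => hvw.2.asymm hwv.2⟩
  · rcases (hT.dist_ne_of_adj r h).lt_or_gt with hlt | hlt
    exacts [Or.inl ⟨h, hlt⟩, Or.inr ⟨h.symm, hlt⟩]
  · rintro (h | h)
    exacts [h.1, h.1.symm]

lemma Connected.exists_orientAwayFrom (hT : T.Connected) (hu : u ≠ r) :
    ∃ v, T.orientAwayFrom r v u := by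
  obtain ⟨p, hp⟩ := hT.exists_walk_length_eq_dist u r
  obtain ⟨v, h, q, rfl⟩ := Walk.exists_eq_cons_of_ne hu p
  refine ⟨v, h.symm, ?_⟩
  rw [dist_comm, T.dist_comm (u := r), ← hp, Walk.length_cons]
  exact Nat.lt_succ_of_le (dist_le q)

lemma IsTree.eq_of_orientAwayFrom (hT : T.IsTree) (hv : T.orientAwayFrom r v u)
    (hw : T.orientAwayFrom r w u) : v = w := by
  have hpath : ∀ {x} (hx : T.orientAwayFrom r x u), ∃ p : T.Walk r x, (p.concat hx.1).IsPath := by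
    intro x hx
    obtain ⟨p, -, hp⟩ := hT.connected.exists_path_of_dist r x
    refine ⟨p, Walk.isPath_of_length_eq_dist _ ?_⟩
    rw [Walk.length_concat, hp, hT.dist_eq_add_one_of_orientAwayFrom hx]
  obtain ⟨p, hp⟩ := hpath hv
  obtain ⟨q, hq⟩ := hpath hw
  exact (Walk.concat_inj ((hT.existsUnique_path r u).unique hp hq)).1

lemma Connected.le_of_monotone_orientAwayFrom {β : Type*} [Preorder β] (hT : T.Connected)
    {f : V → β} (hf : ∀ v w, T.orientAwayFrom r v w → f v ≤ f w) (v : V) : f r ≤ f v := by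
  induction hd : T.dist r v using Nat.strong_induction_on generalizing v with
  | _ n ih =>
    by_cases hvr : v = r
    · rw [hvr]
    · obtain ⟨u, hu⟩ := hT.exists_orientAwayFrom hvr
      exact (ih _ (hd ▸ hu.2) u rfl).trans (hf u v hu)

theorem IsTree.exists_eq_orientAwayFrom [Finite V] (hT : T.IsTree)
    (hD : T.IsOrientation D) (hac : IsAcyclicRel D) (hmor : T.IsMoralOrient D) :
    ∃ r, D = T.orientAwayFrom r := by
  have : Std.Irrefl (Relation.TransGen D) := ⟨hac⟩
  obtain ⟨r, -, hr⟩ := (Finite.wellFounded_of_trans_of_irrefl (Relation.TransGen D)).has_min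
    Set.univ ⟨hT.nonempty.some, trivial⟩
  have hsource : ∀ v, ¬ D v r := fun v h => hr v trivial (.single h)
  -- an edge `w → v` pointing towards `r` and the edge from the parent `x` of `v` form a v-structure
  have hout : ∀ v w, T.orientAwayFrom r v w → D v w := by
    intro v
    induction hd : T.dist r v using Nat.strong_induction_on generalizing v with
    | _ n ih =>
      intro w hvw
      refine ((hD.1 v w).1 hvw.1).resolve_right fun hwv => ?_
      by_cases hvr : v = r
      · exact hsource w (hvr ▸ hwv)
      obtain ⟨x, hxv⟩ := hT.connected.exists_orientAwayFrom hvr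
      have hdx := hT.dist_eq_add_one_of_orientAwayFrom hxv
      have hdw := hT.dist_eq_add_one_of_orientAwayFrom hvw
      have hwx : T.Adj w x := hmor w x v hwv (ih _ (by omega) x rfl v hxv) (by rintro rfl; omega)
      have := hT.dist_eq_dist_add_one_of_adj r hwx
      omega
  refine ⟨r, funext₂ fun v w => propext ⟨fun h => ?_, hout v w⟩⟩
  refine (((hT.isOrientation_orientAwayFrom r).1 v w).1 ((hD.1 v w).2 (.inl h))).resolve_right ?_
  exact fun hwv => hD.2 v w ⟨h, hout w v hwv⟩

end Tree

section Join

variable {T : SimpleGraph V} {m : ℕ} {σ : Equiv.Perm (Fin m)} {r : V} {pos : V → ℕ}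

/-- The clique is ordered by `σ` and the tree is oriented away from `r`; the tree vertex `v`
receives the edges from the first `pos v` clique vertices and points to the others. -/
def joinOrient (T : SimpleGraph V) (σ : Equiv.Perm (Fin m)) (r : V) (pos : V → ℕ) :
    V ⊕ Fin m → V ⊕ Fin m → Prop
  | .inl v, .inl w => T.orientAwayFrom r v w
  | .inl v, .inr c => pos v ≤ σ c
  | .inr c, .inl v => (σ c : ℕ) < pos v
  | .inr c, .inr c' => σ c < σ c'

structure IsAdmissiblePos (T : SimpleGraph V) (m : ℕ) (r : V) (pos : V → ℕ) : Prop where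
  le : ∀ v, pos v ≤ m
  mono : ∀ v w, T.orientAwayFrom r v w → pos v ≤ pos w
  adj_of_lt : ∀ v w, pos v < m → pos w < m → v ≠ w → T.Adj v w

lemma IsTree.isOrientation_joinOrient (hT : T.IsTree) (σ : Equiv.Perm (Fin m)) (r : V)
    (pos : V → ℕ) : (joinGraph T ⊤).IsOrientation (joinOrient T σ r pos) := by
  refine ⟨?_, ?_⟩
  · rintro (v | c) (w | c')
    · exact (hT.isOrientation_orientAwayFrom r).1 v w
    · exact iff_of_true trivial (le_or_gt _ _)
    · exact iff_of_true trivial (lt_or_ge _ _)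
    · exact σ.injective.ne_iff.symm.trans lt_or_lt_iff_ne.symm
  · rintro (v | c) (w | c') ⟨h, h'⟩
    · exact (hT.isOrientation_orientAwayFrom r).2 v w ⟨h, h'⟩
    all_goals simp only [joinOrient] at h h'; omega

lemma isAcyclicRel_joinOrient (hmono : ∀ v w, T.orientAwayFrom r v w → pos v ≤ pos w) :
    IsAcyclicRel (joinOrient T σ r pos) := by
  refine isAcyclicRel_of_map_lt (fun x => match x with
    | .inl v => toLex (2 * pos v, T.dist r v)
    | .inr c => toLex (2 * (σ c : ℕ) + 1, 0)) ?_
  rintro (v | c) (w | c') h <;> simp only [joinOrient] at h <;>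
    simp only [Prod.Lex.toLex_lt_toLex]
  · have := hmono v w h
    have := h.2
    omega
  all_goals omega

lemma IsTree.isMoralOrient_joinOrient (hT : T.IsTree)
    (hadj : ∀ v w, pos v < m → pos w < m → v ≠ w → T.Adj v w) :
    (joinGraph T ⊤).IsMoralOrient (joinOrient T σ r pos) := by
  rintro (v | c) (w | c') (u | c'') h1 h2 hne
  · exact absurd (congrArg Sum.inl (hT.eq_of_orientAwayFrom h1 h2)) hne
  · exact hadj v w (by simp only [joinOrient] at h1; omega) (by simp only [joinOrient] at h2; omega)
      (by simpa using hne)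
  all_goals simp_all [joinGraph]

lemma IsAdmissiblePos.of_joinOrient (hle : ∀ v, pos v ≤ m)
    (hac : IsAcyclicRel (joinOrient T σ r pos))
    (hmor : (joinGraph T ⊤).IsMoralOrient (joinOrient T σ r pos)) :
    IsAdmissiblePos T m r pos where
  le := hle
  mono v w hvw := by
    by_contra! hlt
    -- the clique vertex at position `pos w` would close the cycle `v → w → c → v`
    set c := σ.symm ⟨pos w, hlt.trans_le (hle v)⟩
    have hc : (σ c : ℕ) = pos w := by simp [c]
    have hvw : joinOrient T σ r pos (.inl v) (.inl w) := hvw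
    have hwc : joinOrient T σ r pos (.inl w) (.inr c) := hc.ge
    have hcv : joinOrient T σ r pos (.inr c) (.inl v) := by simp only [joinOrient]; omega
    exact hac (.inl v) (.tail (.tail (.single hvw) hwc) hcv)
  adj_of_lt v w hv hw hne := by
    set c := σ.symm ⟨m - 1, by omega⟩
    have hc : (σ c : ℕ) = m - 1 := by simp [c]
    have hvc : joinOrient T σ r pos (.inl v) (.inr c) := by simp only [joinOrient]; omega
    have hwc : joinOrient T σ r pos (.inl w) (.inr c) := by simp only [joinOrient]; omega
    exact hmor _ _ _ hvc hwc (Sum.inl_injective.ne hne)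

lemma IsTree.exists_joinOrient_eq [Finite V] (hT : T.IsTree) {D : V ⊕ Fin m → V ⊕ Fin m → Prop}
    (hD : (joinGraph T ⊤).IsOrientation D) (hac : IsAcyclicRel D)
    (hmor : (joinGraph T ⊤).IsMoralOrient D) :
    ∃ σ r pos, (∀ v, pos v ≤ m) ∧ D = joinOrient T σ r pos := by
  obtain ⟨σ, hσ⟩ := exists_perm_of_isOrientation_top (hD.comap (Embedding.joinInr T ⊤))
    (hac.comap Sum.inr)
  obtain ⟨r, hr⟩ := hT.exists_eq_orientAwayFrom (hD.comap (Embedding.joinInl T ⊤))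
    (hac.comap Sum.inl) (hmor.comap (Embedding.joinInl T ⊤))
  have hdown : ∀ v, ∃ k ≤ m, ∀ c, D (.inr c) (.inl v) ↔ (σ c : ℕ) < k := by
    intro v
    -- if `c → v` and `c'` precedes `c`, then `v → c'` would close the cycle `v → c' → c → v`
    obtain ⟨k, hk, hQ⟩ :=
      Fin.exists_forall_iff_val_lt (Q := fun j => D (.inr (σ.symm j)) (.inl v))
        fun i j hij hj => ((hD.1 (.inr _) (.inl v)).1 trivial).resolve_right fun hvi =>
          hac _ (.tail (.tail (.single hvi) ((hσ _ _).2 (by simpa using hij))) hj)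
    exact ⟨k, hk, fun c => by simpa using hQ (σ c)⟩
  choose pos hle hpos using hdown
  refine ⟨σ, r, pos, hle, funext₂ ?_⟩
  rintro (v | c) (w | c') <;> apply propext
  · exact iff_of_eq (congrFun₂ hr v w)
  · rw [joinOrient, ← not_lt, ← hpos]
    exact ⟨fun h h' => hD.2 _ _ ⟨h, h'⟩, ((hD.1 (.inr c') (.inl v)).1 trivial).resolve_left⟩
  · exact hpos w c
  · exact hσ c c'

lemma Connected.eq_of_joinOrient_eq (hT : T.Connected) {σ' : Equiv.Perm (Fin m)} {r' : V}
    {pos' : V → ℕ} (hle : ∀ v, pos v ≤ m) (hle' : ∀ v, pos' v ≤ m)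
    (h : joinOrient T σ r pos = joinOrient T σ' r' pos') : σ = σ' ∧ r = r' ∧ pos = pos' := by
  have hrel : ∀ x y, joinOrient T σ r pos x y ↔ joinOrient T σ' r' pos' x y := by simp [h]
  have hr : r = r' := by
    by_contra hne
    obtain ⟨v, hv⟩ := hT.exists_orientAwayFrom (Ne.symm hne)
    exact not_orientAwayFrom_root ((hrel (.inl v) (.inl r')).1 hv)
  have hσ : σ = σ' := Equiv.Perm.eq_of_lt_iff fun a b => hrel (.inr a) (.inr b)
  subst hr hσ
  refine ⟨rfl, rfl, funext fun v => Fin.eq_of_forall_val_lt_iff (hle v) (hle' v) fun j => ?_⟩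
  simpa [joinOrient] using hrel (.inr (σ.symm j)) (.inl v)

end Join

section Code

variable {T : SimpleGraph V} {m : ℕ}

/-- An admissible `pos` is `< m` at most at the root `r` and one child `b` of it (such vertices
are pairwise adjacent, and a tree has no triangles), with `pos r ≤ pos b`. The three summands
encode these three shapes; a dart `d` stands for the root `d.fst` and its child `d.snd`. -/
abbrev PosCode (T : SimpleGraph V) (m : ℕ) :=
  V ⊕ (V × Fin m) ⊕ (T.Dart × {q : Fin m × Fin m // q.1 ≤ q.2})

namespace PosCode

def root : PosCode T m → V
  | .inl r => r
  | .inr (.inl (r, _)) => r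
  | .inr (.inr (d, _)) => d.fst

variable [DecidableEq V]

def pos : PosCode T m → V → ℕ
  | .inl _ => fun _ => m
  | .inr (.inl (r, k)) => Function.update (fun _ => m) r k
  | .inr (.inr (d, q)) => Function.update (Function.update (fun _ => m) d.snd q.1.2) d.fst q.1.1

lemma isAdmissiblePos (hT : T.IsTree) (q : PosCode T m) : IsAdmissiblePos T m q.root q.pos := by
  rcases q with r | ⟨r, k⟩ | ⟨d, ⟨j, k⟩, hjk⟩
  · exact ⟨fun _ => le_rfl, fun _ _ _ => le_rfl, fun _ _ h => absurd h (lt_irrefl m)⟩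
  · refine ⟨fun v => ?_, fun v w hvw => ?_, fun v w hv hw hvw => ?_⟩ <;>
      simp only [root, pos, Function.update_apply] at * <;> split_ifs at * <;> try omega
    all_goals subst_vars
    all_goals first
      | exact absurd hvw not_orientAwayFrom_root
      | exact absurd rfl hvw
  · have hsnd : ∀ v, T.orientAwayFrom d.fst v d.snd → v = d.fst := fun v hv =>
      hT.eq_of_orientAwayFrom hv (orientAwayFrom_root_of_adj d.adj)
    refine ⟨fun v => ?_, fun v w hvw => ?_, fun v w hv hw hvw => ?_⟩ <;>
      simp only [root, pos, Function.update_apply] at * <;> split_ifs at * <;> try omega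
    all_goals subst_vars
    all_goals first
      | exact absurd hvw not_orientAwayFrom_root
      | exact absurd (hsnd v hvw) ‹_›
      | exact absurd rfl hvw
      | exact d.adj
      | exact d.adj.symm

lemma eq_of_root_eq_of_pos_eq {q q' : PosCode T m} (hroot : q.root = q'.root)
    (hpos : q.pos = q'.pos) : q = q' := by
  rcases q with r | ⟨r, k⟩ | ⟨d, ⟨j, k⟩, hjk⟩ <;>
    rcases q' with r' | ⟨r', k'⟩ | ⟨d', ⟨j', k'⟩, hjk'⟩ <;>
    simp only [root, pos, funext_iff, Function.update_apply] at hroot hpos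
  all_goals try subst hroot
  · rfl
  · have := hpos r; simp at this; omega
  · have := hpos d'.snd; simp [d'.snd_ne_fst] at this; omega
  · have := hpos r; simp at this; omega
  · have := hpos r; simp_all [Fin.ext_iff]
  · have := hpos d'.snd; simp [d'.snd_ne_fst] at this; omega
  · have := hpos d.snd; simp [d.snd_ne_fst] at this; omega
  · have := hpos d.snd; simp [d.snd_ne_fst] at this; omega
  · obtain rfl : d = d' := by
      refine Dart.ext _ _ (Prod.ext hroot ?_)
      by_contra hne
      have := hpos d.snd
      simp [d.snd_ne_fst, hne, ← hroot] at this
      omega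
    have := hpos d.fst
    have := hpos d.snd
    simp_all [d.snd_ne_fst, Fin.ext_iff]

lemma exists_eq (hT : T.IsTree) {r : V} {pos : V → ℕ} (h : IsAdmissiblePos T m r pos) :
    ∃ q : PosCode T m, q.root = r ∧ q.pos = pos := by
  have hroot : ∀ v, pos r ≤ pos v := hT.connected.le_of_monotone_orientAwayFrom h.mono
  by_cases hr : pos r < m
  swap
  · refine ⟨.inl r, rfl, funext fun v => ?_⟩
    have := h.le v
    have := hroot v
    simp only [PosCode.pos]
    omega
  by_cases hb : ∃ b, b ≠ r ∧ pos b < m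
  · obtain ⟨b, hbr, hb⟩ := hb
    have hrb : T.Adj r b := h.adj_of_lt r b hr hb hbr.symm
    have hother : ∀ v, v ≠ r → v ≠ b → pos v = m := fun v hvr hvb => by
      by_contra hv
      have hvm : pos v < m := (h.le v).lt_of_ne hv
      -- otherwise `r`, `b`, `v` would form a triangle
      exact hT.dist_ne_of_adj r (h.adj_of_lt b v hb hvm hvb.symm)
        (by rw [dist_eq_one_iff_adj.2 hrb, dist_eq_one_iff_adj.2 (h.adj_of_lt r v hr hvm hvr.symm)])
    refine ⟨.inr (.inr (⟨(r, b), hrb⟩, ⟨(⟨pos r, hr⟩, ⟨pos b, hb⟩),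
      h.mono r b (orientAwayFrom_root_of_adj hrb)⟩)), rfl, funext fun v => ?_⟩
    simp only [PosCode.pos, Function.update_apply]
    split_ifs with hvr hvb <;> simp_all
  · push Not at hb
    refine ⟨.inr (.inl (r, ⟨pos r, hr⟩)), rfl, funext fun v => ?_⟩
    simp only [PosCode.pos, Function.update_apply]
    split_ifs with hvr
    · rw [hvr]
    · exact (hb v hvr).antisymm' (h.le v) |>.symm

end PosCode

lemma PosCode.card [Fintype V] [DecidableRel T.Adj] (hT : T.IsTree) :
    Fintype.card (PosCode T m) =
      (Fintype.card V - 1) * m ^ 2 + (2 * Fintype.card V - 1) * m + Fintype.card V := by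
  have hpairs : Fintype.card {q : Fin m × Fin m // q.1 ≤ q.2} * 2 = (m + 1) * m := by
    rw [← Fintype.card_congr Sym2.sortEquiv, Sym2.card, Fintype.card_fin]
    simpa using (Nat.add_one_mul_choose_eq m 1).symm
  simp only [Fintype.card_sum, Fintype.card_prod, Fintype.card_fin, dart_card_eq_twice_card_edges]
  rw [← hT.card_edgeFinset, Nat.add_sub_cancel, show ∀ n, 2 * (n + 1) - 1 = 2 * n + 1 by omega]
  linear_combination #T.edgeFinset * hpairs

theorem IsTree.setOf_isMoralAcyclic_joinGraph_eq_range [Finite V] [DecidableEq V]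
    (hT : T.IsTree) :
    {D | (joinGraph T (⊤ : SimpleGraph (Fin m))).IsOrientation D ∧ IsAcyclicRel D ∧
        (joinGraph T ⊤).IsMoralOrient D} =
      Set.range fun x : Equiv.Perm (Fin m) × PosCode T m => joinOrient T x.1 x.2.root x.2.pos := by
  ext D
  constructor
  · rintro ⟨hD, hac, hmor⟩
    obtain ⟨σ, r, pos, hle, rfl⟩ := hT.exists_joinOrient_eq hD hac hmor
    obtain ⟨q, rfl, rfl⟩ := PosCode.exists_eq hT (.of_joinOrient hle hac hmor)
    exact ⟨(σ, q), rfl⟩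
  · rintro ⟨⟨σ, q⟩, rfl⟩
    have hq := PosCode.isAdmissiblePos hT q
    exact ⟨hT.isOrientation_joinOrient _ _ _, isAcyclicRel_joinOrient hq.mono,
      hT.isMoralOrient_joinOrient hq.adj_of_lt⟩

lemma IsTree.injective_joinOrient_posCode [DecidableEq V] (hT : T.IsTree) :
    Function.Injective fun x : Equiv.Perm (Fin m) × PosCode T m =>
      joinOrient T x.1 x.2.root x.2.pos := by
  rintro ⟨σ, q⟩ ⟨σ', q'⟩ h
  obtain ⟨rfl, hroot, hpos⟩ := hT.connected.eq_of_joinOrient_eq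
    (PosCode.isAdmissiblePos hT q).le (PosCode.isAdmissiblePos hT q').le h
  exact Prod.ext rfl (PosCode.eq_of_root_eq_of_pos_eq hroot hpos)

end Code

end SimpleGraph

theorem count_tree_join_general {V : Type*} [Fintype V] (T : SimpleGraph V) (hT : T.IsTree)
    (p m : ℕ) (hp : Fintype.card V = p) :
    moralAcyclicCount (joinGraph T (⊤ : SimpleGraph (Fin m)))
      = ((p - 1) * m ^ 2 + (2 * p - 1) * m + p) * Nat.factorial m := by
  classical
  rw [moralAcyclicCount, hT.setOf_isMoralAcyclic_joinGraph_eq_range, ← Nat.card_coe_set_eq,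
    Nat.card_range_of_injective hT.injective_joinOrient_posCode, Nat.card_eq_fintype_card,
    Fintype.card_prod, Fintype.card_perm, Fintype.card_fin, SimpleGraph.PosCode.card hT, hp,
    mul_comm]

theorem count_tree_join {V : Type*} [Fintype V] (T : SimpleGraph V) (hT : T.IsTree)
    (p m : ℕ) (hp : Fintype.card V = p) (hp2 : 2 ≤ p) :
    moralAcyclicCount (joinGraph T (⊤ : SimpleGraph (Fin m)))
      = ((p - 1) * m ^ 2 + (2 * p - 1) * m + p) * Nat.factorial m :=
  count_tree_join_general T hT p m hp
end
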